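/- arXiv:1507.03923 — 5 statements merged into one kernel-verified Lean document; each statement's English description precedes it below -/
import Mathlib

section
/- For any interpretation I, integer weights w_i, literals l_i, comparison ⊙ ∈ {<,≤,≥,>,=,≠}, and bound b ∈ ℤ: avg[w_1:l_1,...,w_n:l_n] ⊙ b is true in I if and only if both sum[w_1-b:l_1,...,w_n-b:l_n] ⊙ 0 and sum[1:l_1,...,1:l_n] > 0 are true in I. -/
noncomputable section
attribute [local instance] Classical.propDecidable

inductive Lit (V : Type) where
  | pos : V → Lit V
  | neg : Lit V → Lit V

def satLit {V : Type} (I : Set V) : Lit V → Prop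
  | .pos p => p ∈ I
  | .neg l => ¬ satLit I l

inductive Cmp where
  | lt | le | ge | gt | eq | ne

def Cmp.holds {α : Type*} [LinearOrder α] : Cmp → α → α → Prop
  | .lt, a, b => a < b
  | .le, a, b => a ≤ b
  | .ge, a, b => a ≥ b
  | .gt, a, b => a > b
  | .eq, a, b => a = b
  | .ne, a, b => a ≠ b

/-- avg[w₁:l₁,...,wₙ:lₙ] ⊙ b  ≡  sum[w₁-b:l₁,...,wₙ-b:lₙ] ⊙ 0  ∧  sum[1:l₁,...,1:lₙ] > 0. -/
theorem avg_iff_sum {V : Type} (I : Set V) (n : ℕ)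
    (w : Fin n → ℤ) (l : Fin n → Lit V) (c : Cmp) (b : ℤ) :
    (1 ≤ (Finset.univ.filter (fun i => satLit I (l i))).card ∧
      Cmp.holds c
        ((∑ i ∈ Finset.univ.filter (fun i => satLit I (l i)), (w i : ℚ)) /
          ((Finset.univ.filter (fun i => satLit I (l i))).card : ℚ)) (b : ℚ)) ↔
    (Cmp.holds c (∑ i ∈ Finset.univ.filter (fun i => satLit I (l i)), (w i - b)) (0 : ℤ) ∧
     (∑ i ∈ Finset.univ.filter (fun i => satLit I (l i)), (1 : ℤ)) > 0) := by
  set S := Finset.univ.filter (fun i => satLit I (l i)) with hS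
  have hsum1 : (∑ i ∈ S, (1 : ℤ)) = (S.card : ℤ) := by simp
  rw [hsum1]
  constructor
  · rintro ⟨hm, hc⟩
    have hm' : 0 < (S.card : ℤ) := by exact_mod_cast hm
    refine ⟨?_, hm'⟩
    have hmq : 0 < (S.card : ℚ) := by exact_mod_cast hm
    have hsub : (∑ i ∈ S, (w i - b)) = (∑ i ∈ S, w i) - S.card * b := by
      rw [Finset.sum_sub_distrib]; simp [mul_comm]
    have key : Cmp.holds c ((∑ i ∈ S, (w i : ℚ)) - S.card * b) (0 : ℚ) := by
      cases c <;> simp only [Cmp.holds] at hc ⊢ <;>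
        [skip; skip; skip; skip; skip; skip] <;>
        first
        | (rw [div_lt_iff₀ hmq] at hc; linarith)
        | (rw [div_le_iff₀ hmq] at hc; linarith)
        | (rw [ge_iff_le, le_div_iff₀ hmq] at hc; linarith)
        | (rw [gt_iff_lt, lt_div_iff₀ hmq] at hc; linarith)
        | (field_simp at hc; linarith)
        | (intro h; apply hc; field_simp; linarith)
    have : ((∑ i ∈ S, (w i - b) : ℤ) : ℚ) = (∑ i ∈ S, (w i : ℚ)) - S.card * b := by
      push_cast [hsub]; ring
    cases c <;> simp only [Cmp.holds] at key ⊢ <;>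
      [exact_mod_cast this ▸ key; exact_mod_cast this ▸ key; exact_mod_cast this ▸ key;
       exact_mod_cast this ▸ key; exact_mod_cast this ▸ key;
       (intro h; exact key (by rw [← this, h]; norm_num))]
  · rintro ⟨hc, hm'⟩
    have hm : 1 ≤ S.card := by exact_mod_cast hm'
    refine ⟨hm, ?_⟩
    have hmq : 0 < (S.card : ℚ) := by exact_mod_cast hm
    have hsub : (∑ i ∈ S, (w i - b)) = (∑ i ∈ S, w i) - S.card * b := by
      rw [Finset.sum_sub_distrib]; simp [mul_comm]
    have key : Cmp.holds c ((∑ i ∈ S, (w i : ℚ)) - S.card * b) (0 : ℚ) := by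
      have : ((∑ i ∈ S, (w i - b) : ℤ) : ℚ) = (∑ i ∈ S, (w i : ℚ)) - S.card * b := by
        push_cast [hsub]; ring
      cases c <;> simp only [Cmp.holds] at hc ⊢ <;>
        [(rw [← this]; exact_mod_cast hc); (rw [← this]; exact_mod_cast hc);
         (rw [ge_iff_le, ← this]; exact_mod_cast hc); (rw [gt_iff_lt, ← this]; exact_mod_cast hc);
         (rw [← this]; exact_mod_cast hc);
         (intro h; rw [← this] at h; exact hc (by exact_mod_cast h))]
    cases c <;> simp only [Cmp.holds] at key ⊢
    · rw [div_lt_iff₀ hmq]; linarith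
    · rw [div_le_iff₀ hmq]; linarith
    · rw [ge_iff_le, le_div_iff₀ hmq]; linarith
    · rw [gt_iff_lt, lt_div_iff₀ hmq]; linarith
    · field_simp; linarith
    · intro h; apply key; rw [div_eq_iff (ne_of_gt hmq)] at h; linarith
end
end

section
/- For any interpretation I, integer weights w_i, literals l_i, and bound b: min[w_1:l_1,...,w_n:l_n] < b is true in I if and only if sum[1:l_i | i ∈ [1..n], w_i < b] > 0 is true in I. -/
noncomputable section
attribute [local instance] Classical.propDecidable

/-- min[w₁:l₁,...,wₙ:lₙ] < b  ≡  sum[1:lᵢ | wᵢ < b] > 0  (model level);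
    the minimum over the empty set is +∞. -/
theorem min_lt_iff_sum_gt {V : Type} (I : Set V) (n : ℕ)
    (w : Fin n → ℤ) (l : Fin n → Lit V) (b : ℤ) :
    (Finset.univ.filter (fun i => satLit I (l i))).inf (fun i => (w i : WithTop ℤ))
        < (b : WithTop ℤ) ↔
    (∑ i ∈ Finset.univ.filter (fun i => w i < b ∧ satLit I (l i)), (1 : ℤ)) > 0 := by
  rw [Finset.inf_lt_iff, Finset.sum_const, gt_iff_lt]
  simp only [Finset.mem_filter, Finset.mem_univ, true_and, WithTop.coe_lt_coe, smul_eq_mul, mul_one]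
  simp [Finset.card_pos, Finset.Nonempty, and_comm]
end
end

section
/- For any interpretation I, integer weights w_i, literals l_i, and bound b: min[w_1:l_1,...,w_n:l_n] ≥ b is true in I if and only if sum[-1:l_i | i ∈ [1..n], w_i < b] > -1 is true in I. -/
noncomputable section
attribute [local instance] Classical.propDecidable

/-- min[w₁:l₁,...,wₙ:lₙ] ≥ b  ≡  sum[-1:lᵢ | wᵢ < b] > -1  (model level). -/
theorem min_ge_iff_sum_gt {V : Type} (I : Set V) (n : ℕ)
    (w : Fin n → ℤ) (l : Fin n → Lit V) (b : ℤ) :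
    (Finset.univ.filter (fun i => satLit I (l i))).inf (fun i => (w i : WithTop ℤ))
        ≥ (b : WithTop ℤ) ↔
    (∑ i ∈ Finset.univ.filter (fun i => w i < b ∧ satLit I (l i)), (-1 : ℤ)) > -1 := by
  rw [Finset.sum_const, ge_iff_le, Finset.le_inf_iff]
  simp only [Finset.mem_filter, Finset.mem_univ, true_and, nsmul_eq_mul]
  constructor
  · intro h
    have : (Finset.univ.filter (fun i => w i < b ∧ satLit I (l i))) = ∅ := by
      rw [Finset.filter_eq_empty_iff]
      rintro i - ⟨hw, hs⟩
      have := h i hs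
      rw [WithTop.coe_le_coe] at this
      omega
    simp [this]
  · intro h i hi
    rw [WithTop.coe_le_coe]
    by_contra hlt
    have hmem : i ∈ Finset.univ.filter (fun i => w i < b ∧ satLit I (l i)) := by
      simp [hi]; omega
    have hpos : 0 < (Finset.univ.filter (fun i => w i < b ∧ satLit I (l i))).card :=
      Finset.card_pos.mpr ⟨i, hmem⟩
    have : ((Finset.univ.filter (fun i => w i < b ∧ satLit I (l i))).card : ℤ) ≥ 1 := by
      exact_mod_cast hpos
    nlinarith [h]
end
end

section
/- For any interpretation I, integer weights w_i, literals l_i, and bound b: min[w_1:l_1,...,w_n:l_n] = b is true in I if and only if sum[1 - n·(b-w_i) : l_i | i ∈ [1..n], w_i ≤ b] > 0 is true in I. -/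
noncomputable section
attribute [local instance] Classical.propDecidable

/-- min[w₁:l₁,...,wₙ:lₙ] = b  ≡  sum[1 - n·(b-wᵢ) : lᵢ | wᵢ ≤ b] > 0  (model level). -/
theorem min_eq_iff_sum_gt {V : Type} (I : Set V) (n : ℕ)
    (w : Fin n → ℤ) (l : Fin n → Lit V) (b : ℤ) :
    (Finset.univ.filter (fun i => satLit I (l i))).inf (fun i => (w i : WithTop ℤ))
        = (b : WithTop ℤ) ↔
    (∑ i ∈ Finset.univ.filter (fun i => w i ≤ b ∧ satLit I (l i)),
        (1 - (n : ℤ) * (b - w i))) > 0 := by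
  classical
  set T := Finset.univ.filter (fun i => satLit I (l i)) with hT
  set S := Finset.univ.filter (fun i => w i ≤ b ∧ satLit I (l i)) with hS
  have hmemS : ∀ i, i ∈ S ↔ w i ≤ b ∧ satLit I (l i) := by
    intro i; simp [hS]
  have hmemT : ∀ i, i ∈ T ↔ satLit I (l i) := by
    intro i; simp [hT]
  -- key characterization of LHS
  have hchar : T.inf (fun i => (w i : WithTop ℤ)) = (b : WithTop ℤ) ↔
      (∃ i ∈ T, w i = b) ∧ ∀ i ∈ T, b ≤ w i := by
    constructor
    · intro h
      have hne : T.Nonempty := by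
        by_contra hc
        rw [Finset.not_nonempty_iff_eq_empty] at hc
        rw [hc] at h
        simp at h
      obtain ⟨j, hj, hje⟩ := Finset.exists_mem_eq_inf T hne (fun i => (w i : WithTop ℤ))
      have hjb : w j = b := by
        have : (w j : WithTop ℤ) = (b : WithTop ℤ) := by rw [← h, hje]
        exact_mod_cast this
      refine ⟨⟨j, hj, hjb⟩, fun i hi => ?_⟩
      have : T.inf (fun i => (w i : WithTop ℤ)) ≤ (w i : WithTop ℤ) := Finset.inf_le hi
      rw [h] at this
      exact_mod_cast this
    · rintro ⟨⟨j, hj, hjb⟩, hge⟩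
      apply le_antisymm
      · have := Finset.inf_le (f := fun i => (w i : WithTop ℤ)) hj
        simpa [hjb] using this
      · exact Finset.le_inf fun i hi => by exact_mod_cast hge i hi
  rw [hchar]
  constructor
  · rintro ⟨⟨j, hj, hjb⟩, hge⟩
    have hSeq : ∀ i ∈ S, w i = b := fun i hi =>
      le_antisymm ((hmemS i).1 hi).1 (hge i ((hmemT i).2 ((hmemS i).1 hi).2))
    have hsum : (∑ i ∈ S, (1 - (n : ℤ) * (b - w i))) = S.card := by
      rw [Finset.sum_congr rfl (fun i hi =>
        show (1 - (n : ℤ) * (b - w i)) = 1 by rw [hSeq i hi]; ring)]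
      simp
    rw [hsum]
    have hjS : j ∈ S := (hmemS j).2 ⟨hjb.le, (hmemT j).1 hj⟩
    exact_mod_cast Finset.card_pos.2 ⟨j, hjS⟩
  · intro hsum
    have hne : S.Nonempty := by
      by_contra hc
      rw [Finset.not_nonempty_iff_eq_empty] at hc
      rw [hc] at hsum
      simp at hsum
    have hall : ∀ i ∈ S, w i = b := by
      by_contra hc
      push_neg at hc
      obtain ⟨j, hj, hjne⟩ := hc
      have hjlt : w j < b := lt_of_le_of_ne ((hmemS j).1 hj).1 hjne
      have hcard : S.card ≤ n := by
        have := Finset.card_le_univ S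
        simpa using this
      have hsplit : (∑ i ∈ S, (1 - (n : ℤ) * (b - w i)))
          = (1 - (n : ℤ) * (b - w j)) + ∑ i ∈ S.erase j, (1 - (n : ℤ) * (b - w i)) :=
        (Finset.add_sum_erase S _ hj).symm
      have h1 : (1 - (n : ℤ) * (b - w j)) ≤ 1 - n := by
        have h2 : (1 : ℤ) ≤ b - w j := by omega
        nlinarith [Int.ofNat_nonneg n]
      have h3 : ∑ i ∈ S.erase j, (1 - (n : ℤ) * (b - w i)) ≤ (S.erase j).card := by
        calc ∑ i ∈ S.erase j, (1 - (n : ℤ) * (b - w i))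
            ≤ ∑ _i ∈ S.erase j, (1 : ℤ) := by
              apply Finset.sum_le_sum
              intro i hi
              have hib : w i ≤ b := ((hmemS i).1 (Finset.mem_of_mem_erase hi)).1
              nlinarith [Int.ofNat_nonneg n]
          _ = (S.erase j).card := by simp
      have h4 : (S.erase j).card ≤ n - 1 := by
        rw [Finset.card_erase_of_mem hj]
        omega
      have hn1 : 1 ≤ n := by
        rcases hne with ⟨x, hx⟩
        have := Finset.card_pos.2 ⟨x, hx⟩
        have hc2 : S.card ≤ n := by simpa using Finset.card_le_univ S
        omega
      have : (∑ i ∈ S, (1 - (n : ℤ) * (b - w i))) ≤ 0 := by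
        rw [hsplit]
        have h4' : ((S.erase j).card : ℤ) ≤ (n : ℤ) - 1 := by
          exact_mod_cast (by omega : (S.erase j).card ≤ n - 1) |>.trans_eq (by omega)
        linarith
      omega
    refine ⟨?_, ?_⟩
    · obtain ⟨j, hj⟩ := hne
      exact ⟨j, (hmemT j).2 ((hmemS j).1 hj).2, hall j hj⟩
    · intro i hi
      by_contra hc
      push_neg at hc
      have hiS : i ∈ S := (hmemS i).2 ⟨hc.le, (hmemT i).1 hi⟩
      exact absurd (hall i hiS) (by omega)
end
end

section
/- For any interpretation I, integer weights w_i, literals l_i, and bound b: min[w_1:l_1,...,w_n:l_n] ≠ b is true in I if and only if sum[n·(b-w_i) - 1 : l_i | i ∈ [1..n], w_i ≤ b] > -1 is true in I. -/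
noncomputable section
attribute [local instance] Classical.propDecidable

/-- min[w₁:l₁,...,wₙ:lₙ] ≠ b  ≡  sum[n·(b-wᵢ) - 1 : lᵢ | wᵢ ≤ b] > -1  (model level). -/
theorem min_ne_iff_sum_gt {V : Type} (I : Set V) (n : ℕ)
    (w : Fin n → ℤ) (l : Fin n → Lit V) (b : ℤ) :
    (Finset.univ.filter (fun i => satLit I (l i))).inf (fun i => (w i : WithTop ℤ))
        ≠ (b : WithTop ℤ) ↔
    (∑ i ∈ Finset.univ.filter (fun i => w i ≤ b ∧ satLit I (l i)),
        ((n : ℤ) * (b - w i) - 1)) > -1 := by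
  classical
  set T := Finset.univ.filter (fun i => satLit I (l i)) with hT
  set F := Finset.univ.filter (fun i : Fin n => w i ≤ b ∧ satLit I (l i)) with hF
  by_cases hlt : ∃ i, satLit I (l i) ∧ w i < b
  · obtain ⟨i, hi, hwi⟩ := hlt
    have hiF : i ∈ F := by simp [hF, hwi.le, hi]
    constructor
    · intro _
      have hsum : ∑ j ∈ F, ((n : ℤ) * (b - w j) - 1)
          = ((n : ℤ) * (b - w i) - 1) + ∑ j ∈ F.erase i, ((n : ℤ) * (b - w j) - 1) :=
        (Finset.add_sum_erase _ _ hiF).symm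
      have h2 : ∑ j ∈ F.erase i, (-1 : ℤ) ≤ ∑ j ∈ F.erase i, ((n : ℤ) * (b - w j) - 1) := by
        apply Finset.sum_le_sum
        intro j hj
        have hjb : w j ≤ b := (Finset.mem_filter.mp (Finset.mem_of_mem_erase hj)).2.1
        have : (0:ℤ) ≤ (n : ℤ) * (b - w j) :=
          mul_nonneg (Int.natCast_nonneg n) (by linarith)
        linarith
      have hcard : (F.erase i).card ≤ n - 1 := by
        have h1 : F.card ≤ n := by
          simpa using Finset.card_le_card (Finset.subset_univ F)
        have := Finset.card_erase_of_mem hiF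
        omega
      have hconst : ∑ j ∈ F.erase i, (-1 : ℤ) = -((F.erase i).card : ℤ) := by simp
      have hn1 : 1 ≤ n := by
        rcases Nat.eq_zero_or_pos n with h | h
        · exact absurd i.2 (by omega)
        · exact h
      have hcard' : ((F.erase i).card : ℤ) ≤ (n : ℤ) - 1 := by
        have := hcard
        omega
      have hterm : (n : ℤ) - 1 ≤ (n : ℤ) * (b - w i) - 1 := by
        have : (1:ℤ) ≤ b - w i := by linarith
        nlinarith [Int.natCast_nonneg n]
      rw [hsum]
      linarith
    · intro _ heq
      have h1 : T.inf (fun i => (w i : WithTop ℤ)) ≤ (w i : WithTop ℤ) :=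
        Finset.inf_le (by simp [hT, hi])
      rw [heq] at h1
      exact absurd (WithTop.coe_le_coe.mp h1) (not_le.mpr hwi)
  · push_neg at hlt
    have hFeq : F = Finset.univ.filter (fun i : Fin n => w i = b ∧ satLit I (l i)) := by
      ext j
      simp only [hF, Finset.mem_filter, Finset.mem_univ, true_and]
      constructor
      · rintro ⟨h1, h2⟩; exact ⟨le_antisymm h1 (hlt j h2), h2⟩
      · rintro ⟨h1, h2⟩; exact ⟨h1.le, h2⟩
    have hsum : ∑ j ∈ F, ((n : ℤ) * (b - w j) - 1) = -(F.card : ℤ) := by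
      have hc : ∀ j ∈ F, ((n : ℤ) * (b - w j) - 1) = -1 := by
        intro j hj
        rw [hFeq] at hj
        have hb := (Finset.mem_filter.mp hj).2.1
        rw [hb]; ring
      rw [Finset.sum_congr rfl hc]; simp
    rw [hsum]
    constructor
    · intro hne
      by_contra h
      push_neg at h
      have hc1 : 1 ≤ F.card := by omega
      obtain ⟨j, hj⟩ := Finset.card_pos.mp hc1
      rw [hFeq] at hj
      obtain ⟨hjb, hjs⟩ := (Finset.mem_filter.mp hj).2
      apply hne
      apply le_antisymm
      · have : T.inf (fun i => (w i : WithTop ℤ)) ≤ (w j : WithTop ℤ) :=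
          Finset.inf_le (by simp [hT, hjs])
        rwa [hjb] at this
      · apply Finset.le_inf
        intro k hk
        have := hlt k (Finset.mem_filter.mp hk).2
        exact_mod_cast this
    · intro hgt heq
      have hFc : F.card = 0 := by omega
      have hF0 : F = ∅ := Finset.card_eq_zero.mp hFc
      -- T must be nonempty since inf = b ≠ ⊤
      have hTne : T.Nonempty := by
        by_contra h
        rw [Finset.not_nonempty_iff_eq_empty] at h
        rw [h] at heq
        simp at heq
      obtain ⟨j, hjT, hjeq⟩ := Finset.exists_mem_eq_inf T hTne (fun i => (w i : WithTop ℤ))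
      rw [heq] at hjeq
      have hjb : w j = b := by exact_mod_cast hjeq.symm
      have hjs : satLit I (l j) := (Finset.mem_filter.mp hjT).2
      have : j ∈ F := by rw [hFeq]; simp [hjb, hjs]
      rw [hF0] at this
      exact absurd this (Finset.notMem_empty j)
end
end
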